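/- arXiv:2301.13414 — 4 statements merged into one kernel-verified Lean document; each statement's English description precedes it below -/
import Mathlib

section
/- Let f : [0,∞) → [0,∞) be integrable with ∫₀^∞ f finite and positive, and suppose f has monotone (non-decreasing) hazard rate, i.e., r ↦ f(r) / ∫_r^∞ f(x) dx is non-decreasing on the set where ∫_r^∞ f > 0. Then for all r ≥ 0 with ∫_r^∞ f > 0: r·(∫_r^∞ f(x) dx)² ≥ (∫₀^r ∫_x^∞ f(y) dy dx)·(∫_r^∞ f(x) dx − r f(r)). -/
/-!
Write `F(x) = ∫_x^∞ f` and `G = ∫_0^r F`. Since `F` is antitone, `G ≤ r F(0) = r (∫_0^r f + F(r))`.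
A non-decreasing hazard rate gives `f(x) F(r) ≤ f(r) F(x)` on `(0, r]`, and integrating this yields
`(∫_0^r f) F(r) ≤ f(r) G`. Multiplying the first bound by `F(r)` and inserting the second gives
`G F(r) ≤ r F(r)² + r f(r) G`, which is the claim.
-/

open MeasureTheory Set

theorem antitoneOn_setIntegral_Ioi {f : ℝ → ℝ} {a : ℝ} (hf_nonneg : 0 ≤ f)
    (hf : IntegrableOn f (Ioi a)) :
    AntitoneOn (fun x => ∫ t in Ioi x, f t) (Ici a) := fun _ hx _ _ hxy =>
  setIntegral_mono_set (hf.mono_set (Ioi_subset_Ioi hx))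
    (ae_of_all _ hf_nonneg) (ae_of_all _ (Ioi_subset_Ioi hxy))

theorem AntitoneOn.setIntegral_Ioc_le {F : ℝ → ℝ} {a b : ℝ} (hF : AntitoneOn F (Icc a b))
    (hab : a ≤ b) :
    ∫ x in Ioc a b, F x ≤ (b - a) * F a := by
  have h := setIntegral_mono_on
    ((hF.integrableOn_isCompact isCompact_Icc).mono_set Ioc_subset_Icc_self)
    (integrableOn_const (measure_Ioc_lt_top (μ := volume)).ne) measurableSet_Ioc
    fun x hx => hF (left_mem_Icc.2 hab) (Ioc_subset_Icc_self hx) hx.1.le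
  rwa [setIntegral_const, Real.volume_real_Ioc_of_le hab, smul_eq_mul] at h

theorem setIntegral_Ioc_mul_tail_le_of_hazard_le {f : ℝ → ℝ} {a b : ℝ} (hf_nonneg : 0 ≤ f)
    (hf : IntegrableOn f (Ioi a)) (hb : 0 < ∫ t in Ioi b, f t)
    (hhazard : ∀ x ∈ Ioc a b, f x / (∫ t in Ioi x, f t) ≤ f b / ∫ t in Ioi b, f t) :
    (∫ x in Ioc a b, f x) * (∫ t in Ioi b, f t) ≤ f b * ∫ x in Ioc a b, ∫ t in Ioi x, f t := by
  have hanti := (antitoneOn_setIntegral_Ioi hf_nonneg hf).mono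
    (Icc_subset_Ici_self : Icc a b ⊆ Ici a)
  have hpointwise : ∀ x ∈ Ioc a b, f x * (∫ t in Ioi b, f t) ≤ f b * ∫ t in Ioi x, f t := by
    intro x hx
    have hFx : 0 < ∫ t in Ioi x, f t :=
      hb.trans_le (hanti (Ioc_subset_Icc_self hx) (right_mem_Icc.2 (hx.1.le.trans hx.2)) hx.2)
    have := hhazard x hx
    rwa [div_le_div_iff₀ hFx hb] at this
  have h := setIntegral_mono_on ((hf.mono_set Ioc_subset_Ioi_self).mul_const _)
    (((hanti.integrableOn_isCompact isCompact_Icc).mono_set Ioc_subset_Icc_self).const_mul _)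
    measurableSet_Ioc hpointwise
  rwa [integral_mul_const, integral_const_mul] at h

theorem stmt_1_general (f : ℝ → ℝ) (hf_nonneg : ∀ x, 0 ≤ f x)
    (hf_int : IntegrableOn f (Set.Ioi 0))
    (hMHR : ∀ r s : ℝ, 0 ≤ r → r ≤ s → 0 < ∫ x in Set.Ioi s, f x →
      f r / (∫ x in Set.Ioi r, f x) ≤ f s / (∫ x in Set.Ioi s, f x)) :
    ∀ r : ℝ, 0 ≤ r → 0 < ∫ x in Set.Ioi r, f x →
      (∫ x in Set.Ioc (0:ℝ) r, ∫ y in Set.Ioi x, f y) * ((∫ x in Set.Ioi r, f x) - r * f r)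
        ≤ r * (∫ x in Set.Ioi r, f x) ^ 2 := by
  intro r hr hFr
  have hG_le : ∫ x in Ioc 0 r, ∫ y in Ioi x, f y ≤ (r - 0) * ∫ y in Ioi 0, f y :=
    ((antitoneOn_setIntegral_Ioi hf_nonneg hf_int).mono Icc_subset_Ici_self).setIntegral_Ioc_le hr
  have hsplit : ∫ y in Ioi 0, f y = (∫ y in Ioc 0 r, f y) + ∫ y in Ioi r, f y := by
    rw [← intervalIntegral.integral_of_le hr, ← intervalIntegral.integral_Ioi_sub_Ioi hf_int hr,
      sub_add_cancel]
  rw [hsplit, sub_zero] at hG_le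
  have hhazard := setIntegral_Ioc_mul_tail_le_of_hazard_le hf_nonneg hf_int hFr
    fun x hx => hMHR x r hx.1.le hx.2 hFr
  linarith [mul_le_mul_of_nonneg_right hG_le hFr.le, mul_le_mul_of_nonneg_left hhazard hr]

theorem stmt_1 (f : ℝ → ℝ) (hf_nonneg : ∀ x, 0 ≤ f x)
    (hf_int : IntegrableOn f (Set.Ioi 0))
    (hf_pos : 0 < ∫ x in Set.Ioi (0:ℝ), f x)
    (hMHR : ∀ r s : ℝ, 0 ≤ r → r ≤ s → 0 < ∫ x in Set.Ioi s, f x →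
      f r / (∫ x in Set.Ioi r, f x) ≤ f s / (∫ x in Set.Ioi s, f x)) :
    ∀ r : ℝ, 0 ≤ r → 0 < ∫ x in Set.Ioi r, f x →
      (∫ x in Set.Ioc (0:ℝ) r, ∫ y in Set.Ioi x, f y) * ((∫ x in Set.Ioi r, f x) - r * f r)
        ≤ r * (∫ x in Set.Ioi r, f x) ^ 2 :=
  stmt_1_general f hf_nonneg hf_int hMHR
end

section
/- Let f : [0,∞) → [0,∞) be integrable, differentiable where needed, with ∫_z^∞ f > 0 for z in an interval [0,r]. If z ↦ f(z)/∫_z^∞ f(x) dx is non-decreasing on [0,r] and f(r)·r ≤ ∫_r^∞ f(x) dx, then z ↦ z·f(z) is non-decreasing on [0,r]. -/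
/-!
Write `F z = ∫_z^∞ f`, so `F' = -f`. Monotonicity of the hazard rate `f / F` gives
`f' F + f² ≥ 0`, and comparing it at `z` and at `r` gives `f z / F z ≤ f r / F r ≤ 1 / r`,
hence `z f z ≤ F z` on `[0, r]`. Then `F (f + z f') ≥ f F - z f² = f (F - z f) ≥ 0`,
so `(z f)' = f + z f' ≥ 0`.
-/

open MeasureTheory Set Filter Topology

lemma HasDerivAt.nonneg_of_monotoneOn_of_mem_nhds {g : ℝ → ℝ} {g' x : ℝ} {s : Set ℝ}
    (hd : HasDerivAt g g' x) (hs : s ∈ 𝓝 x) (hg : MonotoneOn g s) : 0 ≤ g' := by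
  have hacc : AccPt x (𝓟 s) := by
    simpa using (PerfectSpace.univ_preperfect x (mem_univ x)).nhds_inter hs
  exact hd.hasDerivWithinAt.nonneg_of_monotoneOn hacc hg

lemma hasDerivAt_integral_Ioi {E : Type*} [NormedAddCommGroup E] [NormedSpace ℝ E]
    [CompleteSpace E] {f : ℝ → E} {a x : ℝ} (hf : IntegrableOn f (Ioi a)) (hax : a < x)
    (hfx : ContinuousAt f x) : HasDerivAt (fun z => ∫ t in Ioi z, f t) (-f x) x := by
  have hFTC : HasDerivAt (fun z => ∫ t in a..z, f t) (f x) x :=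
    intervalIntegral.integral_hasDerivAt_right
      ((intervalIntegrable_iff_integrableOn_Ioc_of_le hax.le).2
        (hf.mono_set Ioc_subset_Ioi_self))
      (AEStronglyMeasurable.stronglyMeasurableAtFilter_of_mem hf.aestronglyMeasurable
        (Ioi_mem_nhds hax)) hfx
  refine ((hasDerivAt_const x (∫ t in Ioi a, f t)).sub hFTC).congr_of_eventuallyEq ?_
    |>.congr_deriv (zero_sub _)
  filter_upwards [Ioi_mem_nhds hax] with z hz
  rw [Pi.sub_apply, ← intervalIntegral.integral_Ioi_sub_Ioi hf (le_of_lt hz), sub_sub_cancel]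

lemma mul_le_of_monotoneOn_div {f F : ℝ → ℝ} {r z : ℝ}
    (hmono : MonotoneOn (fun z => f z / F z) (Icc 0 r)) (hz : z ∈ Ioc 0 r) (hfz : 0 ≤ f z)
    (hFz : 0 < F z) (hFr : 0 < F r) (hr : f r * r ≤ F r) : z * f z ≤ F z := by
  have hr₀ : 0 < r := hz.1.trans_le hz.2
  have hzr : f z / F z ≤ 1 / r :=
    calc f z / F z ≤ f r / F r := hmono (Ioc_subset_Icc_self hz) (right_mem_Icc.2 hr₀.le) hz.2
      _ ≤ 1 / r := by rw [div_le_div_iff₀ hFr hr₀]; linarith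
  rw [div_le_div_iff₀ hFz hr₀, one_mul] at hzr
  nlinarith [hz.2]

lemma add_mul_nonneg_of_hazard {f f' F x : ℝ} (hf : 0 ≤ f) (hx : 0 ≤ x) (hF : 0 < F)
    (hhazard : 0 ≤ f' * F + f ^ 2) (hxf : x * f ≤ F) : 0 ≤ f + x * f' := by
  have hprod : 0 ≤ F * (f + x * f') := by
    nlinarith [mul_nonneg hx hhazard, mul_nonneg hf (sub_nonneg.2 hxf)]
  exact nonneg_of_mul_nonneg_right (by linarith) hF

theorem stmt_2_general (f : ℝ → ℝ) (hf_nonneg : ∀ x, 0 ≤ f x)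
    (hf_int : IntegrableOn f (Set.Ioi 0))
    (hf_diff : Differentiable ℝ f)
    (r : ℝ)
    (hpos : ∀ z ∈ Set.Icc (0:ℝ) r, 0 < ∫ x in Set.Ioi z, f x)
    (hMHR : MonotoneOn (fun z => f z / ∫ x in Set.Ioi z, f x) (Set.Icc 0 r))
    (hlast : f r * r ≤ ∫ x in Set.Ioi r, f x) :
    MonotoneOn (fun z => z * f z) (Set.Icc 0 r) := by
  set F : ℝ → ℝ := fun z => ∫ x in Ioi z, f x
  refine monotoneOn_of_hasDerivWithinAt_nonneg (f' := fun x => f x + x * deriv f x)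
    (convex_Icc 0 r) (continuous_id.mul hf_diff.continuous).continuousOn
    (fun x _ => ((hasDerivAt_id' x).mul (hf_diff x).hasDerivAt).hasDerivWithinAt.congr_deriv
      (by rw [one_mul])) ?_
  rw [interior_Icc]
  intro x hx
  have hFx : 0 < F x := hpos x (Ioo_subset_Icc_self hx)
  have hF : HasDerivAt F (-f x) x := hasDerivAt_integral_Ioi hf_int hx.1 (hf_diff x).continuousAt
  have hhazard : 0 ≤ deriv f x * F x + f x ^ 2 := by
    have hquot := ((hf_diff x).hasDerivAt.div hF hFx.ne').nonneg_of_monotoneOn_of_mem_nhds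
      (Icc_mem_nhds hx.1 hx.2) hMHR
    rw [le_div_iff₀ (by positivity)] at hquot
    linarith
  have hxf : x * f x ≤ F x := mul_le_of_monotoneOn_div hMHR (Ioo_subset_Ioc_self hx)
    (hf_nonneg x) hFx (hpos r (right_mem_Icc.2 (hx.1.trans hx.2).le)) hlast
  exact add_mul_nonneg_of_hazard (hf_nonneg x) hx.1.le hFx hhazard hxf

theorem stmt_2 (f : ℝ → ℝ) (hf_nonneg : ∀ x, 0 ≤ f x)
    (hf_int : IntegrableOn f (Set.Ioi 0))
    (hf_diff : Differentiable ℝ f)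
    (r : ℝ) (hr : 0 < r)
    (hpos : ∀ z ∈ Set.Icc (0:ℝ) r, 0 < ∫ x in Set.Ioi z, f x)
    (hMHR : MonotoneOn (fun z => f z / ∫ x in Set.Ioi z, f x) (Set.Icc 0 r))
    (hlast : f r * r ≤ ∫ x in Set.Ioi r, f x) :
    MonotoneOn (fun z => z * f z) (Set.Icc 0 r) :=
  stmt_2_general f hf_nonneg hf_int hf_diff r hpos hMHR hlast
end

section
/- There is no non-decreasing function g : (0,∞) → [0,1] satisfying g(z) + g(1/z) = 1 for all z > 0 and lim_{z→0⁺} g(z) = 0, such that the associated Myerson payment p(b) = b g(b) − ∫₀^b g(w) dw satisfies p(b) = α(b+1) for some constant α > 0 on (0,∞). -/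
open MeasureTheory Set Filter

theorem stmt_14 :
    ¬ ∃ (g : ℝ → ℝ) (α : ℝ), 0 < α ∧
      MonotoneOn g (Set.Ioi 0) ∧
      (∀ z : ℝ, 0 < z → g z ∈ Set.Icc (0:ℝ) 1) ∧
      (∀ z : ℝ, 0 < z → g z + g z⁻¹ = 1) ∧
      Tendsto g (nhdsWithin 0 (Set.Ioi 0)) (nhds 0) ∧
      (∀ b : ℝ, 0 < b → b * g b - (∫ w in Set.Ioc (0:ℝ) b, g w) = α * (b + 1)) := by
  rintro ⟨g, α, hα, hmono, hbound, hsym, htend, hp⟩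
  have h := hp α hα
  have hg1 : g α ≤ 1 := (hbound α hα).2
  have hint : 0 ≤ ∫ w in Set.Ioc (0:ℝ) α, g w := by
    apply setIntegral_nonneg measurableSet_Ioc
    intro x hx
    exact (hbound x hx.1).1
  nlinarith [sq_nonneg α]
end

section
/- Suppose p : (0,∞) → (0,∞) is differentiable and satisfies both p(b) = b·p(1/b) for all b > 0 and p'(b) = p'(1/b) for all b > 0. Then p(b) = α(b+1) for some constant α > 0. -/
/-!
Differentiating the reflection identity `p b = b * p b⁻¹` gives `p' b = p b⁻¹ - p' b⁻¹ / b`; with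
`p' b = p' b⁻¹` and `p b⁻¹ = p b / b` this becomes the linear ODE `p' b * (b + 1) = p b`, whose
solutions are exactly the multiples of `b + 1`, since `p / (b + 1)` then has zero derivative.
-/

open Set

theorem hasDerivAt_mul_comp_inv {p : ℝ → ℝ} {b : ℝ} (hb : b ≠ 0)
    (hp : DifferentiableAt ℝ p b⁻¹) :
    HasDerivAt (fun x => x * p x⁻¹) (p b⁻¹ - deriv p b⁻¹ / b) b := by
  have hcomp : HasDerivAt (fun x => p x⁻¹) (deriv p b⁻¹ * -(b ^ 2)⁻¹) b :=
    hp.hasDerivAt.comp b (hasDerivAt_inv hb)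
  refine ((hasDerivAt_id' b).mul hcomp).congr_deriv ?_
  field_simp
  ring

theorem deriv_mul_add_one_eq_of_reflection {p : ℝ → ℝ}
    (hdiff : ∀ b : ℝ, 0 < b → DifferentiableAt ℝ p b)
    (h1 : ∀ b : ℝ, 0 < b → p b = b * p b⁻¹)
    (h2 : ∀ b : ℝ, 0 < b → deriv p b = deriv p b⁻¹) {b : ℝ} (hb : 0 < b) :
    deriv p b * (b + 1) = p b := by
  have hp_eq : (fun x => x * p x⁻¹) =ᶠ[nhds b] p := by
    filter_upwards [Ioi_mem_nhds hb] with x hx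
    exact (h1 x hx).symm
  have hderiv : deriv p b = p b⁻¹ - deriv p b⁻¹ / b :=
    ((hasDerivAt_mul_comp_inv hb.ne' (hdiff _ (inv_pos.2 hb))).congr_of_eventuallyEq
      hp_eq.symm).deriv
  have hp_inv : p b⁻¹ = p b / b := by
    rw [h1 b hb]
    field_simp
  rw [← h2 b hb, hp_inv] at hderiv
  field_simp at hderiv
  linarith

theorem exists_eq_mul_add_one_of_deriv_mul_add_one_eq {f : ℝ → ℝ} {s : Set ℝ}
    (hs : IsOpen s) (hs' : IsPreconnected s) (hs_ne : ∀ x ∈ s, x + 1 ≠ 0)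
    (hf : DifferentiableOn ℝ f s) (hode : ∀ x ∈ s, deriv f x * (x + 1) = f x) :
    ∃ α : ℝ, ∀ x ∈ s, f x = α * (x + 1) := by
  have hdiff_at : ∀ x ∈ s, DifferentiableAt ℝ f x := fun x hx =>
    hf.differentiableAt (hs.mem_nhds hx)
  have hquot : ∀ x ∈ s, HasDerivAt (fun y => f y / (y + 1)) 0 x := by
    intro x hx
    refine ((hdiff_at x hx).hasDerivAt.div ((hasDerivAt_id' x).add_const 1)
      (hs_ne x hx)).congr_deriv ?_
    rw [mul_one, hode x hx, sub_self, zero_div]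
  obtain ⟨α, hα⟩ := hs.exists_is_const_of_deriv_eq_zero hs'
    (fun x hx => (hquot x hx).differentiableAt.differentiableWithinAt)
    (fun x hx => (hquot x hx).deriv)
  refine ⟨α, fun x hx => ?_⟩
  rw [← hα x hx, div_mul_cancel₀ _ (hs_ne x hx)]

theorem stmt_15 (p : ℝ → ℝ)
    (hdiff : ∀ b : ℝ, 0 < b → DifferentiableAt ℝ p b)
    (hpos : ∀ b : ℝ, 0 < b → 0 < p b)
    (h1 : ∀ b : ℝ, 0 < b → p b = b * p b⁻¹)
    (h2 : ∀ b : ℝ, 0 < b → deriv p b = deriv p b⁻¹) :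
    ∃ α : ℝ, 0 < α ∧ ∀ b : ℝ, 0 < b → p b = α * (b + 1) := by
  obtain ⟨α, hα⟩ := exists_eq_mul_add_one_of_deriv_mul_add_one_eq isOpen_Ioi
    isPreconnected_Ioi (fun x (hx : 0 < x) => by positivity)
    (fun x hx => (hdiff x hx).differentiableWithinAt)
    (fun x hx => deriv_mul_add_one_eq_of_reflection hdiff h1 h2 hx)
  have hp1 : p 1 = α * 2 := by
    rw [hα 1 (mem_Ioi.2 one_pos)]
    norm_num
  exact ⟨α, by linarith [hpos 1 one_pos], hα⟩
end
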